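/- arXiv:1309.3959 — 5 statements merged into one kernel-verified Lean document; each statement's English description precedes it below -/
import Mathlib

section
/- Order preservation under Bregman bounded-confidence dynamics (Proposition 1): if the decision weights evolve according to the bounded-confidence dynamics with neighborhoods defined by the Bregman divergence d, and a_i(0) ≤ a_j(0), then a_i(t) ≤ a_j(t) for all times t ≥ 0. -/
/-- Tangent line inequality for a differentiable convex function. -/
lemma tangent_le_aux (f : ℝ → ℝ) (hf : Differentiable ℝ f)
    (hconv : ConvexOn ℝ Set.univ f) (u v : ℝ) :
    deriv f u * (v - u) ≤ f v - f u := by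
  rcases lt_trichotomy u v with h | h | h
  · have hs := hconv.deriv_le_slope (Set.mem_univ u) (Set.mem_univ v) h (hf u)
    rw [slope_def_field] at hs
    have h' : 0 < v - u := by linarith
    have := (le_div_iff₀ h').mp hs
    linarith
  · simp [h]
  · have hs := hconv.slope_le_deriv (Set.mem_univ v) (Set.mem_univ u) h (hf u)
    rw [slope_def_field] at hs
    have h' : 0 < u - v := by linarith
    have := (div_le_iff₀ h').mp hs
    nlinarith

/-- The derivative of a differentiable convex function is monotone. -/
lemma deriv_mono_aux (f : ℝ → ℝ) (hf : Differentiable ℝ f)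
    (hconv : ConvexOn ℝ Set.univ f) : Monotone (deriv f) := by
  intro u v huv
  rcases eq_or_lt_of_le huv with rfl | h
  · exact le_rfl
  · have h1 := hconv.deriv_le_slope (Set.mem_univ u) (Set.mem_univ v) h (hf u)
    have h2 := hconv.slope_le_deriv (Set.mem_univ u) (Set.mem_univ v) h (hf v)
    exact h1.trans h2

/-- Cross sum inequality. -/
lemma cross_sum_aux {α : Type*} (S T : Finset α) (v : α → ℝ)
    (h : ∀ k ∈ S, ∀ m ∈ T, v k ≤ v m) :
    (∑ k ∈ S, v k) * T.card ≤ (∑ m ∈ T, v m) * S.card := by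
  have h1 : (∑ k ∈ S, v k) * T.card = ∑ k ∈ S, ∑ _m ∈ T, v k := by
    simp [Finset.sum_const, Finset.sum_mul, mul_comm]
  have h2 : (∑ m ∈ T, v m) * S.card = ∑ k ∈ S, ∑ m ∈ T, v m := by
    simp [Finset.sum_const, mul_comm]
  rw [h1, h2]
  exact Finset.sum_le_sum fun k hk => Finset.sum_le_sum fun m hm => h k hk m hm

/-- Average monotonicity lemma. -/
lemma avg_mono_aux {α : Type*} [DecidableEq α] (A B : Finset α) (v : α → ℝ)
    (hA : A.Nonempty) (hB : B.Nonempty)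
    (hAB : ∀ k ∈ A \ B, ∀ m ∈ B, v k ≤ v m)
    (hBA : ∀ k ∈ A, ∀ m ∈ B \ A, v k ≤ v m) :
    (∑ k ∈ A, v k) / (A.card : ℝ) ≤ (∑ m ∈ B, v m) / (B.card : ℝ) := by
  have hApos : (0 : ℝ) < A.card := by exact_mod_cast Finset.card_pos.mpr hA
  have hBpos : (0 : ℝ) < B.card := by exact_mod_cast Finset.card_pos.mpr hB
  rcases (A ∩ B).eq_empty_or_nonempty with hC | hC
  · -- A and B are disjoint
    have hsub : ∀ k ∈ A, k ∈ A \ B := by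
      intro k hk
      rw [Finset.mem_sdiff]
      refine ⟨hk, fun hkB => ?_⟩
      have : k ∈ A ∩ B := Finset.mem_inter.mpr ⟨hk, hkB⟩
      simp [hC] at this
    rw [div_le_div_iff₀ hApos hBpos]
    exact cross_sum_aux A B v fun k hk m hm => hAB k (hsub k hk) m hm
  · set C := A ∩ B with hCdef
    have hCpos : (0 : ℝ) < C.card := by exact_mod_cast Finset.card_pos.mpr hC
    have hsumA : ∑ k ∈ C, v k + ∑ k ∈ A \ B, v k = ∑ k ∈ A, v k :=
      Finset.sum_inter_add_sum_sdiff A B v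
    have hcardA : C.card + (A \ B).card = A.card := Finset.card_inter_add_card_sdiff A B
    have hsumB : ∑ k ∈ B ∩ A, v k + ∑ k ∈ B \ A, v k = ∑ k ∈ B, v k :=
      Finset.sum_inter_add_sum_sdiff B A v
    have hcardB : (B ∩ A).card + (B \ A).card = B.card := Finset.card_inter_add_card_sdiff B A
    have hBAint : B ∩ A = C := Finset.inter_comm B A
    rw [hBAint] at hsumB hcardB
    -- cross sums
    have hc1 : (∑ k ∈ A \ B, v k) * C.card ≤ (∑ m ∈ C, v m) * (A \ B).card :=
      cross_sum_aux _ _ v fun k hk m hm => hAB k hk m (Finset.mem_of_mem_inter_right hm)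
    have hc2 : (∑ k ∈ C, v k) * (B \ A).card ≤ (∑ m ∈ B \ A, v m) * C.card :=
      cross_sum_aux _ _ v fun k hk m hm => hBA k (Finset.mem_of_mem_inter_left hk) m hm
    -- avg A ≤ avg C ≤ avg B
    have ecA : ((A.card : ℕ) : ℝ) = (C.card : ℝ) + ((A \ B).card : ℝ) := by
      exact_mod_cast hcardA.symm
    have ecB : ((B.card : ℕ) : ℝ) = (C.card : ℝ) + ((B \ A).card : ℝ) := by
      exact_mod_cast hcardB.symm
    have step1 : (∑ k ∈ A, v k) / (A.card : ℝ) ≤ (∑ k ∈ C, v k) / (C.card : ℝ) := by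
      rw [div_le_div_iff₀ hApos hCpos, ← hsumA, ecA]
      ring_nf
      nlinarith [hc1]
    have step2 : (∑ k ∈ C, v k) / (C.card : ℝ) ≤ (∑ m ∈ B, v m) / (B.card : ℝ) := by
      rw [div_le_div_iff₀ hCpos hBpos, ← hsumB, ecB]
      ring_nf
      nlinarith [hc2]
    exact step1.trans step2

/-- Proposition 1: order preservation under bounded-confidence dynamics with
neighborhoods defined by the Bregman divergence of a differentiable convex `f`. -/
theorem order_preservation_bounded_confidence
    (n : ℕ) (hn : 1 ≤ n) (θ : ℝ) (hθ : 0 < θ)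
    (f : ℝ → ℝ) (hf : Differentiable ℝ f) (hconv : ConvexOn ℝ Set.univ f)
    (d : ℝ → ℝ → ℝ) (hd : ∀ p a : ℝ, d p a = f p - f a - deriv f a * (p - a))
    (a : ℕ → Fin n → ℝ)
    (N : ℕ → Fin n → Finset (Fin n))
    (hN : ∀ t i, N t i = Finset.univ.filter (fun j => d (a t i) (a t j) ≤ θ))
    (hupd : ∀ t i, a (t + 1) i = (∑ j ∈ N t i, a t j) / ((N t i).card : ℝ))
    (i j : Fin n) (h0 : a 0 i ≤ a 0 j) :
    ∀ t : ℕ, a t i ≤ a t j := by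
  have htan := tangent_le_aux f hf hconv
  have hmono := deriv_mono_aux f hf hconv
  -- quasiconvexity of d in second argument
  have hd2 : ∀ p a1 a2 : ℝ, (a2 ≤ a1 ∧ a1 ≤ p) ∨ (p ≤ a1 ∧ a1 ≤ a2) → d p a1 ≤ d p a2 := by
    intro p a1 a2 hcase
    rw [hd, hd]
    have h1 := htan a2 a1
    rcases hcase with ⟨h2, h3⟩ | ⟨h2, h3⟩
    · have h4 : deriv f a2 ≤ deriv f a1 := hmono h2
      nlinarith
    · have h4 : deriv f a1 ≤ deriv f a2 := hmono h3
      nlinarith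
  -- quasiconvexity of d in first argument
  have hd1 : ∀ q p1 p2 : ℝ, (q ≤ p1 ∧ p1 ≤ p2) ∨ (p2 ≤ p1 ∧ p1 ≤ q) → d p1 q ≤ d p2 q := by
    intro q p1 p2 hcase
    rw [hd, hd]
    have h1 := htan p1 p2
    rcases hcase with ⟨h2, h3⟩ | ⟨h2, h3⟩
    · have h4 : deriv f q ≤ deriv f p1 := hmono h2
      nlinarith
    · have h4 : deriv f p1 ≤ deriv f q := hmono h3
      nlinarith
  have hself : ∀ t i, i ∈ N t i := by
    intro t i
    rw [hN]
    simp only [Finset.mem_filter, Finset.mem_univ, true_and]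
    rw [hd]
    simp
    linarith
  have hmem : ∀ t i k, k ∈ N t i ↔ d (a t i) (a t k) ≤ θ := by
    intro t i k
    rw [hN]
    simp
  intro t
  induction t with
  | zero => exact h0
  | succ t ih =>
    set x := a t i with hx
    set y := a t j with hy
    rw [hupd t i, hupd t j]
    apply avg_mono_aux
    · exact ⟨i, hself t i⟩
    · exact ⟨j, hself t j⟩
    · -- k ∈ N t i \ N t j, m ∈ N t j
      intro k hk m hm
      rw [Finset.mem_sdiff] at hk
      obtain ⟨hkA, hkB⟩ := hk
      rw [hmem] at hkA hm
      rw [hmem] at hkB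
      by_contra hcon
      push_neg at hcon
      rcases le_total (a t k) y with hky | hky
      · -- a t m < a t k ≤ y : second-arg monotonicity at p = y
        exact hkB ((hd2 y (a t k) (a t m) (Or.inl ⟨le_of_lt hcon, hky⟩)).trans hm)
      · -- x ≤ y ≤ a t k : first-arg monotonicity
        exact hkB ((hd1 (a t k) y x (Or.inr ⟨ih, hky⟩)).trans hkA)
    · -- k ∈ N t i, m ∈ N t j \ N t i
      intro k hk m hm
      rw [Finset.mem_sdiff] at hm
      obtain ⟨hmB, hmA⟩ := hm
      rw [hmem] at hk hmB
      rw [hmem] at hmA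
      by_contra hcon
      push_neg at hcon
      rcases le_total x (a t m) with hxm | hxm
      · -- x ≤ a t m < a t k : second-arg monotonicity at p = x
        exact hmA ((hd2 x (a t m) (a t k) (Or.inr ⟨hxm, le_of_lt hcon⟩)).trans hk)
      · -- a t m ≤ x ≤ y : first-arg monotonicity
        exact hmA ((hd1 (a t m) x y (Or.inl ⟨hxm, ih⟩)).trans hmB)
end

section
/- Ordering of neighborhood difference sets (intermediate claim in the proof of Proposition 1): suppose agents have weights a_1, …, a_n ∈ ℝ and neighborhoods N_i = { j : d(a_i, a_j) ≤ θ } for a Bregman divergence d and threshold θ > 0. If a_i ≤ a_j, then for every ℓ1 ∈ N_i \ N_j and every ℓ2 ∈ N_i ∩ N_j one has a_{ℓ1} ≤ a_{ℓ2}, and for every ℓ2 ∈ N_i ∩ N_j and every ℓ3 ∈ N_j \ N_i one has a_{ℓ2} ≤ a_{ℓ3}. -/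
/-!
Write `D(p, c) = f p - f c - f'(c) (p - c)`. The three-point identity
`D(y, c) = D(y, m) + D(m, c) + (f'(m) - f'(c)) (y - m)` shows, since `f'` is monotone and
`D ≥ 0`, that `D(y, c)` can only shrink when either argument is replaced by a point `m` between
`c` and `y`. For `a i ≤ a j`, if some `ℓ1 ∈ N i \ N j` lay above some `ℓ2 ∈ N i ∩ N j`, then
`a j` lies between `a ℓ1` and `a i`, or `a ℓ1` lies between `a ℓ2` and `a j`; either way
`D(a j, a ℓ1) ≤ θ`, i.e. `ℓ1 ∈ N j`. The second ordering is the mirror image.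
-/

open Set

noncomputable def bregmanDiv (f : ℝ → ℝ) (p c : ℝ) : ℝ :=
  f p - f c - deriv f c * (p - c)

theorem ConvexOn.deriv_mul_sub_le {f : ℝ → ℝ} (hconv : ConvexOn ℝ univ f)
    (hf : Differentiable ℝ f) (x y : ℝ) :
    deriv f x * (y - x) ≤ f y - f x := by
  rcases lt_trichotomy x y with hxy | rfl | hyx
  · have hslope := hconv.deriv_le_slope (mem_univ x) (mem_univ y) hxy (hf x)
    rwa [slope_def_field, le_div_iff₀ (sub_pos.mpr hxy)] at hslope
  · simp
  · have hslope := hconv.slope_le_deriv (mem_univ y) (mem_univ x) hyx (hf x)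
    rw [slope_def_field, div_le_iff₀ (sub_pos.mpr hyx)] at hslope
    linarith

theorem ConvexOn.deriv_sub_mul_sub_nonneg {f : ℝ → ℝ} (hconv : ConvexOn ℝ univ f)
    (hf : Differentiable ℝ f) {y m c : ℝ} (hm : m ∈ uIcc c y) :
    0 ≤ (deriv f m - deriv f c) * (y - m) := by
  have hmono : Monotone (deriv f) := monotoneOn_univ.mp (hconv.monotoneOn_deriv fun x _ => hf x)
  rcases mem_uIcc.mp hm with ⟨hcm, hmy⟩ | ⟨hym, hmc⟩
  · exact mul_nonneg (sub_nonneg.mpr (hmono hcm)) (sub_nonneg.mpr hmy)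
  · exact mul_nonneg_of_nonpos_of_nonpos (sub_nonpos.mpr (hmono hmc)) (sub_nonpos.mpr hym)

namespace bregmanDiv

variable {f : ℝ → ℝ}

theorem nonneg (hconv : ConvexOn ℝ univ f) (hf : Differentiable ℝ f) (p c : ℝ) :
    0 ≤ bregmanDiv f p c := by
  have := hconv.deriv_mul_sub_le hf c p
  unfold bregmanDiv
  linarith

theorem three_point (f : ℝ → ℝ) (y m c : ℝ) :
    bregmanDiv f y c =
      bregmanDiv f y m + bregmanDiv f m c + (deriv f m - deriv f c) * (y - m) := by
  unfold bregmanDiv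
  ring

theorem left_le_of_mem_uIcc (hconv : ConvexOn ℝ univ f) (hf : Differentiable ℝ f)
    {y m c : ℝ} (hm : m ∈ uIcc c y) :
    bregmanDiv f m c ≤ bregmanDiv f y c := by
  rw [three_point f y m c]
  linarith [nonneg hconv hf y m, hconv.deriv_sub_mul_sub_nonneg hf hm]

theorem right_le_of_mem_uIcc (hconv : ConvexOn ℝ univ f) (hf : Differentiable ℝ f)
    {y m c : ℝ} (hm : m ∈ uIcc c y) :
    bregmanDiv f y m ≤ bregmanDiv f y c := by
  rw [three_point f y m c]
  linarith [nonneg hconv hf m c, hconv.deriv_sub_mul_sub_nonneg hf hm]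

theorem upper_le_max_of_le_of_le (hconv : ConvexOn ℝ univ f) (hf : Differentiable ℝ f)
    {x y u v : ℝ} (hxy : x ≤ y) (hvu : v ≤ u) :
    bregmanDiv f y u ≤ max (bregmanDiv f x u) (bregmanDiv f y v) := by
  rcases le_or_gt y u with hyu | huy
  · exact le_max_of_le_left <|
      left_le_of_mem_uIcc hconv hf (mem_uIcc.mpr <| .inr ⟨hxy, hyu⟩)
  · exact le_max_of_le_right <|
      right_le_of_mem_uIcc hconv hf (mem_uIcc.mpr <| .inl ⟨hvu, huy.le⟩)

theorem lower_le_max_of_le_of_le (hconv : ConvexOn ℝ univ f) (hf : Differentiable ℝ f)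
    {x y u v : ℝ} (hxy : x ≤ y) (hvu : v ≤ u) :
    bregmanDiv f x v ≤ max (bregmanDiv f x u) (bregmanDiv f y v) := by
  rcases le_or_gt v x with hvx | hxv
  · exact le_max_of_le_right <|
      left_le_of_mem_uIcc hconv hf (mem_uIcc.mpr <| .inl ⟨hvx, hxy⟩)
  · exact le_max_of_le_left <|
      right_le_of_mem_uIcc hconv hf (mem_uIcc.mpr <| .inr ⟨hxv.le, hvu⟩)

end bregmanDiv

theorem neighborhood_difference_ordering_general
    (n : ℕ) (θ : ℝ)
    (f : ℝ → ℝ) (hf : Differentiable ℝ f) (hconv : ConvexOn ℝ Set.univ f)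
    (d : ℝ → ℝ → ℝ) (hd : ∀ p a : ℝ, d p a = f p - f a - deriv f a * (p - a))
    (a : Fin n → ℝ)
    (N : Fin n → Finset (Fin n))
    (hN : ∀ i, N i = Finset.univ.filter (fun j => d (a i) (a j) ≤ θ))
    (i j : Fin n) (hij : a i ≤ a j) :
    (∀ ℓ1 ∈ N i \ N j, ∀ ℓ2 ∈ N i ∩ N j, a ℓ1 ≤ a ℓ2) ∧
    (∀ ℓ2 ∈ N i ∩ N j, ∀ ℓ3 ∈ N j \ N i, a ℓ2 ≤ a ℓ3) := by
  obtain rfl : d = bregmanDiv f := funext₂ hd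
  simp only [hN, Finset.mem_sdiff, Finset.mem_inter, Finset.mem_filter, Finset.mem_univ, true_and]
  constructor
  · rintro ℓ1 ⟨hiℓ1, hjℓ1⟩ ℓ2 ⟨-, hjℓ2⟩
    by_contra! hlt
    exact hjℓ1 <|
      (bregmanDiv.upper_le_max_of_le_of_le hconv hf hij hlt.le).trans (max_le hiℓ1 hjℓ2)
  · rintro ℓ2 ⟨hiℓ2, -⟩ ℓ3 ⟨hjℓ3, hiℓ3⟩
    by_contra! hlt
    exact hiℓ3 <|
      (bregmanDiv.lower_le_max_of_le_of_le hconv hf hij hlt.le).trans (max_le hiℓ2 hjℓ3)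

/-- Ordering of neighborhood difference sets: if `a i ≤ a j`, then weights of
agents in `N i \ N j` are at most those in `N i ∩ N j`, which in turn are at
most those in `N j \ N i`. -/
theorem neighborhood_difference_ordering
    (n : ℕ) (hn : 1 ≤ n) (θ : ℝ) (hθ : 0 < θ)
    (f : ℝ → ℝ) (hf : Differentiable ℝ f) (hconv : ConvexOn ℝ Set.univ f)
    (d : ℝ → ℝ → ℝ) (hd : ∀ p a : ℝ, d p a = f p - f a - deriv f a * (p - a))
    (a : Fin n → ℝ)
    (N : Fin n → Finset (Fin n))
    (hN : ∀ i, N i = Finset.univ.filter (fun j => d (a i) (a j) ≤ θ))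
    (i j : Fin n) (hij : a i ≤ a j) :
    (∀ ℓ1 ∈ N i \ N j, ∀ ℓ2 ∈ N i ∩ N j, a ℓ1 ≤ a ℓ2) ∧
    (∀ ℓ2 ∈ N i ∩ N j, ∀ ℓ3 ∈ N j \ N i, a ℓ2 ≤ a ℓ3) :=
  neighborhood_difference_ordering_general n θ f hf hconv d hd a N hN i j hij
end

section
/- Non-crossing across a divergence gap (claim in the proof of Proposition 2): suppose at time t the weights are sorted, a_1(t) ≤ ⋯ ≤ a_n(t), and for some index ν both d(a_ν(t), a_{ν+1}(t)) > θ and d(a_{ν+1}(t), a_ν(t)) > θ. Then a_ν(t+1) ≤ a_ν(t) and a_{ν+1}(t+1) ≥ a_{ν+1}(t); that is, once the two blocks are separated by more than the confidence bound, the lower block cannot increase past its top value and the upper block cannot decrease past its bottom value. -/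
/-- Non-crossing across a divergence gap: if the weights at time `t` are sorted
and agents `ν` and `ν+1` are separated by more than `θ` in both directions of
the divergence, then `a ν` cannot increase and `a (ν+1)` cannot decrease at the
next step. -/
theorem non_crossing_across_gap
    (n : ℕ) (hn : 1 ≤ n) (θ : ℝ) (hθ : 0 < θ)
    (f : ℝ → ℝ) (hf : Differentiable ℝ f) (hconv : ConvexOn ℝ Set.univ f)
    (d : ℝ → ℝ → ℝ) (hd : ∀ p a : ℝ, d p a = f p - f a - deriv f a * (p - a))
    (a : ℕ → Fin n → ℝ)
    (N : ℕ → Fin n → Finset (Fin n))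
    (hN : ∀ t i, N t i = Finset.univ.filter (fun j => d (a t i) (a t j) ≤ θ))
    (hupd : ∀ t i, a (t + 1) i = (∑ j ∈ N t i, a t j) / ((N t i).card : ℝ))
    (t : ℕ)
    (hsorted : ∀ i j : Fin n, i ≤ j → a t i ≤ a t j)
    (ν : Fin n) (hν : ν.val + 1 < n)
    (hgap1 : θ < d (a t ν) (a t ⟨ν.val + 1, hν⟩))
    (hgap2 : θ < d (a t ⟨ν.val + 1, hν⟩) (a t ν)) :
    a (t + 1) ν ≤ a t ν ∧ a t ⟨ν.val + 1, hν⟩ ≤ a (t + 1) ⟨ν.val + 1, hν⟩ := by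
  -- derivative is monotone
  have hmono : Monotone (deriv f) := by
    have := hconv.monotoneOn_deriv (fun x _ => (hf x))
    intro x y hxy
    exact this (Set.mem_univ x) (Set.mem_univ y) hxy
  -- gradient inequality
  have grad : ∀ x y : ℝ, deriv f x * (y - x) ≤ f y - f x := by
    intro x y
    rcases lt_trichotomy x y with h | h | h
    · have := hconv.deriv_le_slope (Set.mem_univ x) (Set.mem_univ y) h (hf x)
      rw [slope_def_field] at this
      have hxy : (0:ℝ) < y - x := by linarith
      calc deriv f x * (y - x) ≤ ((f y - f x) / (y - x)) * (y - x) := by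
            exact mul_le_mul_of_nonneg_right this hxy.le
        _ = f y - f x := by field_simp
    · subst h; simp
    · have := hconv.slope_le_deriv (Set.mem_univ y) (Set.mem_univ x) h (hf x)
      rw [slope_def_field] at this
      have hxy : (0:ℝ) < x - y := by linarith
      have h2 : f x - f y ≤ deriv f x * (x - y) := by
        calc f x - f y = ((f x - f y) / (x - y)) * (x - y) := by field_simp
          _ ≤ deriv f x * (x - y) := mul_le_mul_of_nonneg_right this hxy.le
      nlinarith
  -- monotonicity of d p · above p
  have dmono_up : ∀ p b c : ℝ, p ≤ b → b ≤ c → d p b ≤ d p c := by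
    intro p b c hpb hbc
    rw [hd, hd]
    have h1 := grad c b
    have h2 : deriv f b ≤ deriv f c := hmono hbc
    nlinarith [mul_le_mul_of_nonneg_right h2 (sub_nonneg.mpr hpb)]
  -- monotonicity of d p · below p (reversed)
  have dmono_down : ∀ p b c : ℝ, c ≤ b → b ≤ p → d p b ≤ d p c := by
    intro p b c hcb hbp
    rw [hd, hd]
    have h1 := grad c b
    have h2 : deriv f c ≤ deriv f b := hmono hcb
    nlinarith [mul_le_mul_of_nonneg_right h2 (sub_nonneg.mpr hbp)]
  set ν' : Fin n := ⟨ν.val + 1, hν⟩ with hν'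
  have hpq : a t ν ≤ a t ν' := hsorted ν ν' (by simp [hν', Fin.le_def])
  have hd0 : ∀ x : ℝ, d x x = 0 := by intro x; rw [hd]; ring
  constructor
  · -- neighbors of ν are all ≤ ν
    have hmemν : ν ∈ N t ν := by
      rw [hN]; simp [hd0, hθ.le]
    have hbound : ∀ j ∈ N t ν, a t j ≤ a t ν := by
      intro j hj
      rw [hN, Finset.mem_filter] at hj
      by_contra hcon
      push_neg at hcon
      have hjge : ν' ≤ j := by
        by_contra hlt
        push_neg at hlt
        have : j ≤ ν := by
          rw [Fin.le_def]; rw [Fin.lt_def] at hlt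
          simpa [hν'] using Nat.lt_succ_iff.mp hlt
        exact absurd (hsorted j ν this) (not_le.mpr hcon)
      have : d (a t ν) (a t ν') ≤ d (a t ν) (a t j) :=
        dmono_up _ _ _ hpq (hsorted ν' j hjge)
      linarith [hj.2]
    have hcard : (0:ℝ) < ((N t ν).card : ℝ) := by
      have : 0 < (N t ν).card := Finset.card_pos.mpr ⟨ν, hmemν⟩
      exact_mod_cast this
    rw [hupd, div_le_iff₀ hcard]
    calc ∑ j ∈ N t ν, a t j ≤ ∑ _j ∈ N t ν, a t ν := Finset.sum_le_sum hbound
      _ = a t ν * ((N t ν).card : ℝ) := by rw [Finset.sum_const]; ring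
  · -- neighbors of ν' are all ≥ ν'
    have hmemν : ν' ∈ N t ν' := by
      rw [hN]; simp [hd0, hθ.le]
    have hbound : ∀ j ∈ N t ν', a t ν' ≤ a t j := by
      intro j hj
      rw [hN, Finset.mem_filter] at hj
      by_contra hcon
      push_neg at hcon
      have hjle : j ≤ ν := by
        by_contra hlt
        push_neg at hlt
        have : ν' ≤ j := by
          rw [Fin.le_def]; rw [Fin.lt_def] at hlt
          simpa [hν'] using hlt
        exact absurd (hsorted ν' j this) (not_le.mpr hcon)
      have : d (a t ν') (a t ν) ≤ d (a t ν') (a t j) :=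
        dmono_down _ _ _ (hsorted j ν hjle) hpq
      linarith [hj.2]
    have hcard : (0:ℝ) < ((N t ν').card : ℝ) := by
      have : 0 < (N t ν').card := Finset.card_pos.mpr ⟨ν', hmemν⟩
      exact_mod_cast this
    rw [hupd, le_div_iff₀ hcard]
    calc a t ν' * ((N t ν').card : ℝ) = ∑ _j ∈ N t ν', a t ν' := by
          rw [Finset.sum_const]; ring
      _ ≤ ∑ j ∈ N t ν', a t j := Finset.sum_le_sum hbound
end

section
/- Monotone degradation of Bayes risk in the threshold (monotonicity of the Bayes risk error divergence in its second argument for the Gaussian model): fix σ > 0 and p ∈ (0,1), and let η*(p) = 1/2 + σ²·ln(p/(1−p)). If η1 ≤ η2 ≤ η*(p) then R(p, η2) ≤ R(p, η1), and if η*(p) ≤ η1 ≤ η2 then R(p, η1) ≤ R(p, η2). -/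
open MeasureTheory ProbabilityTheory

/-!
For `a ≤ b` the risk changes by `R(p, b) - R(p, a) = ∫_{[a,b)} ((1 - p) f₁ - p f₀)`, where `fᵢ` is
the density of `μᵢ`. The likelihood ratio `f₁ / f₀ = exp ((2x - 1) / (2σ²))` is increasing and
crosses `p / (1 - p)` exactly at `η*(p)`, so the integrand is `≤ 0` below `η*(p)` and `≥ 0` above.
-/

open Set Real NNReal

/-- The threshold test decides for `μ₁` iff `y ≥ η`; `p` is the prior weight of `μ₀`. -/
noncomputable def thresholdBayesRisk (μ₀ μ₁ : Measure ℝ) (p η : ℝ) : ℝ :=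
  p * μ₀.real (Ici η) + (1 - p) * μ₁.real (Iio η)

theorem thresholdBayesRisk_sub_thresholdBayesRisk (μ₀ μ₁ : Measure ℝ) [IsFiniteMeasure μ₀]
    [IsFiniteMeasure μ₁] (p : ℝ) {a b : ℝ} (hab : a ≤ b) :
    thresholdBayesRisk μ₀ μ₁ p b - thresholdBayesRisk μ₀ μ₁ p a
      = (1 - p) * μ₁.real (Ico a b) - p * μ₀.real (Ico a b) := by
  have hIci : μ₀.real (Ici a) = μ₀.real (Ico a b) + μ₀.real (Ici b) := by
    rw [← Ico_union_Ici_eq_Ici hab,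
      measureReal_union ((Iio_disjoint_Ici le_rfl).mono_left Ico_subset_Iio_self) measurableSet_Ici]
  have hIio : μ₁.real (Iio b) = μ₁.real (Iio a) + μ₁.real (Ico a b) := by
    rw [← Iio_union_Ico_eq_Iio hab, measureReal_union
      ((Iio_disjoint_Ici le_rfl).mono_right Ico_subset_Ici_self) measurableSet_Ico]
  simp only [thresholdBayesRisk, hIci, hIio]
  ring

theorem gaussianReal_real_eq_setIntegral (m : ℝ) {v : ℝ≥0} (hv : v ≠ 0) (s : Set ℝ) :
    (gaussianReal m v).real s = ∫ x in s, gaussianPDFReal m v x := by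
  rw [measureReal_def, gaussianReal_apply_eq_integral m hv, ENNReal.toReal_ofReal]
  exact integral_nonneg fun x ↦ gaussianPDFReal_nonneg m v x

theorem mul_gaussianReal_real_le_of_gaussianPDFReal {m₀ m₁ : ℝ} {v₀ v₁ : ℝ≥0} (hv₀ : v₀ ≠ 0)
    (hv₁ : v₁ ≠ 0) {c₀ c₁ : ℝ} {s : Set ℝ} (hs : MeasurableSet s)
    (h : ∀ x ∈ s, c₀ * gaussianPDFReal m₀ v₀ x ≤ c₁ * gaussianPDFReal m₁ v₁ x) :
    c₀ * (gaussianReal m₀ v₀).real s ≤ c₁ * (gaussianReal m₁ v₁).real s := by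
  rw [gaussianReal_real_eq_setIntegral m₀ hv₀, gaussianReal_real_eq_setIntegral m₁ hv₁,
    ← integral_const_mul, ← integral_const_mul]
  exact setIntegral_mono_on ((integrable_gaussianPDFReal m₀ v₀).integrableOn.const_mul c₀)
    ((integrable_gaussianPDFReal m₁ v₁).integrableOn.const_mul c₁) hs h

theorem gaussianPDFReal_eq_exp_mul_gaussianPDFReal_zero (m : ℝ) (v : ℝ≥0) (x : ℝ) :
    gaussianPDFReal m v x = rexp ((2 * m * x - m ^ 2) / (2 * v)) * gaussianPDFReal 0 v x := by
  simp only [gaussianPDFReal, mul_left_comm (rexp _), ← Real.exp_add]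
  ring_nf

theorem mul_exp_le_iff_le_log_div {p q t : ℝ} (hp : 0 < p) (hq : 0 < q) :
    q * rexp t ≤ p ↔ t ≤ log (p / q) := by
  rw [le_log_iff_exp_le (div_pos hp hq), le_div_iff₀' hq]

theorem le_mul_exp_iff_log_div_le {p q t : ℝ} (hp : 0 < p) (hq : 0 < q) :
    p ≤ q * rexp t ↔ log (p / q) ≤ t := by
  rw [log_le_iff_le_exp (div_pos hp hq), div_le_iff₀' hq]

section GaussianShift

variable {v : ℝ≥0} {p x : ℝ}

theorem mul_gaussianPDFReal_one_le_iff (hv : v ≠ 0) (hp : p ∈ Ioo 0 1) :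
    (1 - p) * gaussianPDFReal 1 v x ≤ p * gaussianPDFReal 0 v x
      ↔ x ≤ 1 / 2 + v * log (p / (1 - p)) := by
  rw [gaussianPDFReal_eq_exp_mul_gaussianPDFReal_zero 1, ← mul_assoc,
    mul_le_mul_iff_left₀ (gaussianPDFReal_pos 0 v x hv),
    mul_exp_le_iff_le_log_div hp.1 (sub_pos.2 hp.2), div_le_iff₀ (by positivity)]
  constructor <;> intro h <;> linarith

theorem mul_gaussianPDFReal_zero_le_iff (hv : v ≠ 0) (hp : p ∈ Ioo 0 1) :
    p * gaussianPDFReal 0 v x ≤ (1 - p) * gaussianPDFReal 1 v x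
      ↔ 1 / 2 + v * log (p / (1 - p)) ≤ x := by
  rw [gaussianPDFReal_eq_exp_mul_gaussianPDFReal_zero 1, ← mul_assoc,
    mul_le_mul_iff_left₀ (gaussianPDFReal_pos 0 v x hv),
    le_mul_exp_iff_log_div_le hp.1 (sub_pos.2 hp.2), le_div_iff₀ (by positivity)]
  constructor <;> intro h <;> linarith

theorem antitoneOn_thresholdBayesRisk_gaussianReal (hv : v ≠ 0) (hp : p ∈ Ioo 0 1) :
    AntitoneOn (thresholdBayesRisk (gaussianReal 0 v) (gaussianReal 1 v) p)
      (Iic (1 / 2 + v * log (p / (1 - p)))) := by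
  intro a _ b hb hab
  have hmass :
      (1 - p) * (gaussianReal 1 v).real (Ico a b) ≤ p * (gaussianReal 0 v).real (Ico a b) :=
    mul_gaussianReal_real_le_of_gaussianPDFReal hv hv measurableSet_Ico fun x hx ↦
      (mul_gaussianPDFReal_one_le_iff hv hp).2 (hx.2.le.trans hb)
  linarith [thresholdBayesRisk_sub_thresholdBayesRisk (gaussianReal 0 v) (gaussianReal 1 v) p hab]

theorem monotoneOn_thresholdBayesRisk_gaussianReal (hv : v ≠ 0) (hp : p ∈ Ioo 0 1) :
    MonotoneOn (thresholdBayesRisk (gaussianReal 0 v) (gaussianReal 1 v) p)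
      (Ici (1 / 2 + v * log (p / (1 - p)))) := by
  intro a ha b _ hab
  have hmass :
      p * (gaussianReal 0 v).real (Ico a b) ≤ (1 - p) * (gaussianReal 1 v).real (Ico a b) :=
    mul_gaussianReal_real_le_of_gaussianPDFReal hv hv measurableSet_Ico fun x hx ↦
      (mul_gaussianPDFReal_zero_le_iff hv hp).2 (le_trans ha hx.1)
  linarith [thresholdBayesRisk_sub_thresholdBayesRisk (gaussianReal 0 v) (gaussianReal 1 v) p hab]

end GaussianShift

/-- Monotone degradation of Bayes risk in the threshold for the Gaussian model:
the Bayes risk is nonincreasing in `η` below the matched threshold `η*(p)` and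
nondecreasing above it. -/
theorem gaussian_bayes_risk_monotone_threshold
    (σ : ℝ) (hσ : 0 < σ)
    (μ0 μ1 : Measure ℝ)
    (hμ0 : μ0 = gaussianReal 0 ⟨σ ^ 2, sq_nonneg σ⟩)
    (hμ1 : μ1 = gaussianReal 1 ⟨σ ^ 2, sq_nonneg σ⟩)
    (pI pII : ℝ → ℝ)
    (hpI : ∀ η : ℝ, pI η = (μ0 {y : ℝ | η ≤ y}).toReal)
    (hpII : ∀ η : ℝ, pII η = (μ1 {y : ℝ | y < η}).toReal)
    (R : ℝ → ℝ → ℝ)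
    (hR : ∀ p η : ℝ, R p η = p * pI η + (1 - p) * pII η)
    (ηstar : ℝ → ℝ)
    (hηstar : ∀ p : ℝ, ηstar p = 1 / 2 + σ ^ 2 * Real.log (p / (1 - p)))
    (p : ℝ) (hp : p ∈ Set.Ioo (0 : ℝ) 1) :
    (∀ η1 η2 : ℝ, η1 ≤ η2 → η2 ≤ ηstar p → R p η2 ≤ R p η1) ∧
    (∀ η1 η2 : ℝ, ηstar p ≤ η1 → η1 ≤ η2 → R p η1 ≤ R p η2) := by
  have hv : (⟨σ ^ 2, sq_nonneg σ⟩ : ℝ≥0) ≠ 0 :=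
    fun h ↦ (pow_pos hσ 2).ne' (congrArg NNReal.toReal h)
  have hRisk : R p = thresholdBayesRisk μ0 μ1 p := funext fun η ↦ by rw [hR, hpI, hpII]; rfl
  rw [hRisk, hηstar, hμ0, hμ1]
  exact ⟨fun η1 η2 h12 h2 ↦ antitoneOn_thresholdBayesRisk_gaussianReal hv hp (h12.trans h2) h2 h12,
    fun η1 η2 h1 h12 ↦ monotoneOn_thresholdBayesRisk_gaussianReal hv hp h1 (h1.trans h12) h12⟩
end

section
/- Envelope derivative of the minimum Bayes risk for the Gaussian model: fix σ > 0 and define V(p) = R(p, η*(p)) for p ∈ (0,1), where η*(p) = 1/2 + σ²·ln(p/(1−p)). Then V is differentiable on (0,1) and V'(p) = pI(η*(p)) − pII(η*(p)); the term involving the derivative of η* vanishes because η*(p) is a stationary point of η ↦ R(p, η). -/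
/-!
The minimum Bayes risk `V(p) = p·pI(η*(p)) + (1 - p)·pII(η*(p))` is affine in `p` for a fixed
threshold, so by the chain rule `V'(p) = pI(η*) - pII(η*) + (p·pI'(η*) + (1 - p)·pII'(η*))·η*'(p)`.
The error probabilities are Gaussian tail probabilities, whose derivatives are `∓` the densities,
and the likelihood-ratio identity `p·f₀(η*) = (1 - p)·f₁(η*)` that defines `η*` makes the bracket
vanish.
-/

open MeasureTheory ProbabilityTheory Real Set

theorem HasDerivAt.affine_comb_comp_of_stationary {a b η : ℝ → ℝ} {a' b' η' p : ℝ}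
    (ha : HasDerivAt a a' (η p)) (hb : HasDerivAt b b' (η p)) (hη : HasDerivAt η η' p)
    (hstat : p * a' + (1 - p) * b' = 0) :
    HasDerivAt (fun q => q * a (η q) + (1 - q) * b (η q)) (a (η p) - b (η p)) p := by
  have hsum : HasDerivAt (fun q => q * a (η q) + (1 - q) * b (η q))
      (1 * a (η p) + p * (a' * η') + (-1 * b (η p) + (1 - p) * (b' * η'))) p :=
    ((hasDerivAt_id' p).mul (ha.comp p hη)).add
      (((hasDerivAt_id' p).const_sub 1).mul (hb.comp p hη))
  exact hsum.congr_deriv (by linear_combination η' * hstat)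

theorem hasDerivAt_setIntegral_Iic {E : Type*} [NormedAddCommGroup E] [NormedSpace ℝ E]
    [CompleteSpace E] {f : ℝ → E} (hf : Integrable f) (hcont : Continuous f) (x : ℝ) :
    HasDerivAt (fun y => ∫ t in Iic y, f t) (f x) x := by
  have hsplit : (fun y => ∫ t in Iic y, f t)
      = fun y => (∫ t in Iic 0, f t) + ∫ t in (0 : ℝ)..y, f t := by
    funext y
    rw [← intervalIntegral.integral_Iic_sub_Iic hf.integrableOn hf.integrableOn,
      add_sub_cancel]
  rw [hsplit]
  exact (intervalIntegral.integral_hasDerivAt_right hf.intervalIntegrable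
    hcont.stronglyMeasurable.stronglyMeasurableAtFilter hcont.continuousAt).const_add _

namespace ProbabilityTheory

theorem continuous_gaussianPDFReal (m : ℝ) (v : NNReal) : Continuous (gaussianPDFReal m v) := by
  rw [gaussianPDFReal_def]
  fun_prop

variable (m : ℝ) {v : NNReal}

theorem gaussianReal_real_Iio (hv : v ≠ 0) (x : ℝ) :
    (gaussianReal m v).real (Iio x) = ∫ t in Iic x, gaussianPDFReal m v t := by
  rw [measureReal_def, gaussianReal_apply_eq_integral m hv, integral_Iic_eq_integral_Iio,
    ENNReal.toReal_ofReal (setIntegral_nonneg measurableSet_Iio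
      fun t _ => gaussianPDFReal_nonneg m v t)]

theorem hasDerivAt_gaussianReal_real_Iio (hv : v ≠ 0) (x : ℝ) :
    HasDerivAt (fun y => (gaussianReal m v).real (Iio y)) (gaussianPDFReal m v x) x := by
  simp_rw [gaussianReal_real_Iio m hv]
  exact hasDerivAt_setIntegral_Iic (integrable_gaussianPDFReal m v)
    (continuous_gaussianPDFReal m v) x

theorem hasDerivAt_gaussianReal_real_Ici (hv : v ≠ 0) (x : ℝ) :
    HasDerivAt (fun y => (gaussianReal m v).real (Ici y)) (-gaussianPDFReal m v x) x := by
  simp_rw [← compl_Iio, probReal_compl_eq_one_sub measurableSet_Iio]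
  exact (hasDerivAt_gaussianReal_real_Iio m hv x).const_sub 1

theorem gaussianPDFReal_eq_exp_mul (m₀ m₁ : ℝ) (v : NNReal) (x : ℝ) :
    gaussianPDFReal m₀ v x
      = rexp ((m₀ - m₁) * (2 * x - m₀ - m₁) / (2 * v)) * gaussianPDFReal m₁ v x := by
  simp only [gaussianPDFReal]
  rw [mul_left_comm, ← Real.exp_add]
  congr 3
  ring

end ProbabilityTheory

/-- Envelope derivative of the minimum Bayes risk for the Gaussian model:
`V(p) = R(p, η*(p))` is differentiable on `(0,1)` with derivative
`V'(p) = pI(η*(p)) − pII(η*(p))`. -/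
theorem gaussian_min_bayes_risk_envelope_derivative
    (σ : ℝ) (hσ : 0 < σ)
    (μ0 μ1 : Measure ℝ)
    (hμ0 : μ0 = gaussianReal 0 ⟨σ ^ 2, sq_nonneg σ⟩)
    (hμ1 : μ1 = gaussianReal 1 ⟨σ ^ 2, sq_nonneg σ⟩)
    (pI pII : ℝ → ℝ)
    (hpI : ∀ η : ℝ, pI η = (μ0 {y : ℝ | η ≤ y}).toReal)
    (hpII : ∀ η : ℝ, pII η = (μ1 {y : ℝ | y < η}).toReal)
    (R : ℝ → ℝ → ℝ)
    (hR : ∀ p η : ℝ, R p η = p * pI η + (1 - p) * pII η)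
    (ηstar : ℝ → ℝ)
    (hηstar : ∀ p : ℝ, ηstar p = 1 / 2 + σ ^ 2 * Real.log (p / (1 - p)))
    (V : ℝ → ℝ)
    (hV : ∀ p : ℝ, V p = R p (ηstar p)) :
    ∀ p ∈ Set.Ioo (0 : ℝ) 1,
      HasDerivAt V (pI (ηstar p) - pII (ηstar p)) p := by
  rintro p ⟨hp0, hp1⟩
  set v : NNReal := ⟨σ ^ 2, sq_nonneg σ⟩
  have hv : v ≠ 0 := NNReal.coe_ne_zero.mp (pow_pos hσ 2).ne'
  have hpI' : pI = fun η => (gaussianReal 0 v).real (Ici η) :=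
    funext fun η => by rw [hpI, hμ0]; rfl
  have hpII' : pII = fun η => (gaussianReal 1 v).real (Iio η) :=
    funext fun η => by rw [hpII, hμ1]; rfl
  have hV' : V = fun q => q * pI (ηstar q) + (1 - q) * pII (ηstar q) :=
    funext fun q => by rw [hV, hR]
  have hη : DifferentiableAt ℝ ηstar p := by
    rw [funext hηstar]
    fun_prop (disch := first | positivity | linarith)
  have hlikelihood :
      p * gaussianPDFReal 0 v (ηstar p) = (1 - p) * gaussianPDFReal 1 v (ηstar p) := by
    have hexponent :
        (0 - 1) * (2 * ηstar p - 0 - 1) / (2 * (v : ℝ)) = -Real.log (p / (1 - p)) := by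
      rw [hηstar, show (v : ℝ) = σ ^ 2 from rfl]
      field_simp
      ring
    have hodds : rexp (-Real.log (p / (1 - p))) = (1 - p) / p := by
      rw [Real.exp_neg, Real.exp_log (by apply div_pos <;> linarith), inv_div]
    rw [gaussianPDFReal_eq_exp_mul 0 1, hexponent, hodds]
    field_simp
  rw [hV', hpI', hpII']
  exact (hasDerivAt_gaussianReal_real_Ici 0 hv _).affine_comb_comp_of_stationary
    (hasDerivAt_gaussianReal_real_Iio 1 hv _) hη.hasDerivAt (by linarith)
end
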